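/- arXiv:2102.02373 — 5 statements merged into one kernel-verified Lean document; each statement's English description precedes it below -/
import Mathlib

section
/- Let n = a + bi ∈ ℤ[i] be primary (n ≡ 1 mod (1+i)³) with norm N(n) = a² + b². Then a ≡ (-1)^((N(n)-1)/4) (mod 4) and b ≡ 1 - (-1)^((N(n)-1)/4) (mod 4). -/
noncomputable section
open Complex
open scoped ComplexConjugate Classical

/-- `n` is primary: `n ≡ 1 mod (1+i)^3` in `ℤ[i]`. -/
def IsPrimary (n : GaussianInt) : Prop := (⟨1, 1⟩ : GaussianInt) ^ 3 ∣ n - 1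

/-- The additive character `ẽ(z) = exp(2πi (z/(2i) - z̄/(2i)))` on `ℚ(i)`. -/
def echar (z : ℂ) : ℂ :=
  Complex.exp (2 * Real.pi * I * (z / (2 * I) - (conj z) / (2 * I)))

/-- The quartic residue symbol `(a/ϖ)₄` at a Gaussian prime `ϖ`: the unique fourth root of
unity `ζ ∈ {1, -1, i, -i}` with `a^((N(ϖ)-1)/4) ≡ ζ (mod ϖ)`, or `0` if `ϖ ∣ a`. -/
def quarticSymbolPrime (a ϖ : GaussianInt) : GaussianInt :=
  if ϖ ∣ a then 0
  else if h : ∃ ζ : GaussianInt,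
      ζ ∈ ({1, -1, ⟨0, 1⟩, ⟨0, -1⟩} : Set GaussianInt) ∧
      ϖ ∣ a ^ (((Zsqrtd.norm ϖ).natAbs - 1) / 4) - ζ
    then h.choose else 0

/-- The quartic residue symbol `(a/n)₄` for odd `n ∈ ℤ[i]`, extended multiplicatively from
Gaussian primes, with value `1` when `n` is a unit. -/
def quarticSymbol (a n : GaussianInt) : GaussianInt :=
  if n = 0 then 0
  else ((UniqueFactorizationMonoid.factors n).map fun ϖ => quarticSymbolPrime a ϖ).prod

/-- The twisted quartic Gauss sum `g(k,n) = Σ_{x mod n} (x/n)₄ ẽ(kx/n)`. -/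
def gaussSumK (k n : GaussianInt) : ℂ :=
  ∑ᶠ x : GaussianInt ⧸ Ideal.span {n},
    GaussianInt.toComplex (quarticSymbol x.out n) *
      echar (GaussianInt.toComplex k * GaussianInt.toComplex x.out / GaussianInt.toComplex n)

/-- The quartic Gauss sum `g(n) = g(1,n)`. -/
def quarticGaussSum (n : GaussianInt) : ℂ := gaussSumK 1 n


/-- for primary `n = a + bi`, `a ≡ (-1)^((N(n)-1)/4) (mod 4)` and
`b ≡ 1 - (-1)^((N(n)-1)/4) (mod 4)`. -/
theorem primary_re_im_congr (a b : ℤ) (h : IsPrimary (⟨a, b⟩ : GaussianInt)) :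
    a ≡ (-1) ^ (((Zsqrtd.norm (⟨a, b⟩ : GaussianInt) - 1) / 4).toNat) [ZMOD 4] ∧
      b ≡ 1 - (-1) ^ (((Zsqrtd.norm (⟨a, b⟩ : GaussianInt) - 1) / 4).toNat) [ZMOD 4] := by
  obtain ⟨q, hq⟩ := h
  have hmul : ((⟨1, 1⟩ : GaussianInt) ^ 3 * q) = ⟨-2 * q.re - 2 * q.im, 2 * q.re - 2 * q.im⟩ := by
    ext <;> simp [pow_succ, Zsqrtd.re_mul, Zsqrtd.im_mul] <;> ring
  rw [hmul] at hq
  have ha : a = 1 - 2 * q.re - 2 * q.im := by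
    have := congrArg Zsqrtd.re hq; simp [Zsqrtd.re_sub] at this; omega
  have hb : b = 2 * q.re - 2 * q.im := by
    have := congrArg Zsqrtd.im hq; simp [Zsqrtd.im_sub] at this; omega
  set c := q.re; set d := q.im
  have hnorm : Zsqrtd.norm (⟨a, b⟩ : GaussianInt) - 1
      = 4 * (2 * c ^ 2 + 2 * d ^ 2 - c - d) := by
    simp [Zsqrtd.norm, ha, hb]; ring
  set e : ℤ := 2 * c ^ 2 + 2 * d ^ 2 - c - d with he
  have hdiv : (Zsqrtd.norm (⟨a, b⟩ : GaussianInt) - 1) / 4 = e := by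
    rw [hnorm]; exact Int.mul_ediv_cancel_left _ (by norm_num)
  have hce : 2 * c ^ 2 - c ≥ 0 := by nlinarith [sq_nonneg c, sq_nonneg (c - 1)]
  have hde : 2 * d ^ 2 - d ≥ 0 := by nlinarith [sq_nonneg d, sq_nonneg (d - 1)]
  have hepos : 0 ≤ e := by omega
  rw [hdiv]
  rcases Int.even_or_odd (c + d) with hpar | hpar
  · obtain ⟨m, hm⟩ := hpar
    have heven : Even e.toNat := by
      rw [← Int.even_coe_nat, Int.toNat_of_nonneg hepos, he]
      exact ⟨c ^ 2 + d ^ 2 - m, by omega⟩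
    rw [heven.neg_one_pow]
    constructor <;> simp only [Int.ModEq] <;> omega
  · obtain ⟨m, hm⟩ := hpar
    have hodd : Odd e.toNat := by
      rw [← Int.odd_coe_nat, Int.toNat_of_nonneg hepos, he]
      exact ⟨c ^ 2 + d ^ 2 - m - 1, by omega⟩
    rw [hodd.neg_one_pow]
    constructor <;> simp only [Int.ModEq] <;> omega
end
end

section
/- Every nonzero ideal of ℤ[i] coprime to 2 has a unique generator congruent to 1 modulo (1+i)³. -/
noncomputable section
open Complex
open scoped ComplexConjugate Classical

/-! Write `π = 1 + i`, so that `π³ = -2 + 2i` has norm `8`. Since `ℤ[i]` is a PID, the ideal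
is `(z)`, and coprimality with `2 = -iπ²` means `π ∤ z`, i.e. `Re z + Im z` is odd. A Gaussian
integer `a + bi` is `≡ 1 (mod π³)` iff `b` is even and `a + b ≡ 1 (mod 4)`; multiplying by `-1`
changes the sign of `a + b` and multiplying by `i` swaps the parities of `a` and `b`, so some
associate of `z` is primary. If `z` and `uz` are both primary then `π³ ∣ z(u - 1)` with `z` prime
to `π`, so `8` divides `N(u - 1) = 2 - 2 Re u ≤ 4`, forcing `u = 1`. -/

local notation "ℤ[i]" => GaussianInt

namespace GaussianInt

theorem re_add_im_emod_two_of_isCoprime_two {z : ℤ[i]} (h : IsCoprime z 2) :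
    (z.re + z.im) % 2 = 1 := by
  by_contra hpar
  have hdvd_z : (⟨1, 1⟩ : ℤ[i]) ∣ z :=
    ⟨⟨(z.re + z.im) / 2, (z.im - z.re) / 2⟩, by ext <;> simp <;> omega⟩
  have hunit := h.isUnit_of_dvd' hdvd_z ⟨⟨1, -1⟩, by decide⟩
  have hnorm := (Zsqrtd.norm_eq_one_iff' (by norm_num) _).mpr hunit
  exact absurd hnorm (by decide)

theorem eq_one_of_isUnit_of_dvd_sub_one {u m : ℤ[i]} (hu : IsUnit u) (hm : 4 < m.norm)
    (hdvd : m ∣ u - 1) : u = 1 := by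
  obtain ⟨k, hk⟩ := hdvd
  have hnorm_u : u.re * u.re + u.im * u.im = 1 := by
    simpa [Zsqrtd.norm_def] using (Zsqrtd.norm_eq_one_iff' (by norm_num) u).mpr hu
  have hsmall : (u - 1).norm ≤ 4 := by
    simp only [Zsqrtd.norm_def, Zsqrtd.re_sub, Zsqrtd.im_sub, Zsqrtd.re_one, Zsqrtd.im_one]
    nlinarith [sq_nonneg (u.re + 1), sq_nonneg u.im]
  have hk0 : k.norm = 0 := by
    rw [hk, Zsqrtd.norm_mul] at hsmall
    nlinarith [norm_nonneg k]
  rwa [norm_eq_zero.mp hk0, mul_zero, sub_eq_zero] at hk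

end GaussianInt

theorem isPrimary_iff (z : ℤ[i]) :
    IsPrimary z ↔ z.im % 2 = 0 ∧ (z.re + z.im) % 4 = 1 := by
  have hcube : (⟨1, 1⟩ : ℤ[i]) ^ 3 = ⟨-2, 2⟩ := by decide
  rw [IsPrimary, hcube]
  constructor
  · rintro ⟨w, hw⟩
    have hre := congrArg Zsqrtd.re hw
    have him := congrArg Zsqrtd.im hw
    simp only [Zsqrtd.re_sub, Zsqrtd.im_sub, Zsqrtd.re_one, Zsqrtd.im_one, Zsqrtd.re_mul,
      Zsqrtd.im_mul] at hre him
    omega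
  · rintro ⟨him, hsum⟩
    refine ⟨⟨z.im / 2 - (z.re + z.im) / 4, -((z.re + z.im) / 4)⟩, ?_⟩
    ext <;> simp only [Zsqrtd.re_sub, Zsqrtd.im_sub, Zsqrtd.re_one, Zsqrtd.im_one,
      Zsqrtd.re_mul, Zsqrtd.im_mul] <;> omega

theorem isPrimary_or_isPrimary_neg {z : ℤ[i]} (him : z.im % 2 = 0)
    (hsum : (z.re + z.im) % 2 = 1) : IsPrimary z ∨ IsPrimary (-z) := by
  simp only [isPrimary_iff, Zsqrtd.re_neg, Zsqrtd.im_neg]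
  omega

theorem exists_isUnit_mul_isPrimary {z : ℤ[i]} (hsum : (z.re + z.im) % 2 = 1) :
    ∃ u : ℤ[i], IsUnit u ∧ IsPrimary (u * z) := by
  have of_im_even {w : ℤ[i]} (him : w.im % 2 = 0) (hsum : (w.re + w.im) % 2 = 1) :
      ∃ u : ℤ[i], IsUnit u ∧ IsPrimary (u * w) := by
    rcases isPrimary_or_isPrimary_neg him hsum with h | h
    · exact ⟨1, isUnit_one, by rwa [one_mul]⟩
    · exact ⟨-1, isUnit_one.neg, by rwa [neg_one_mul]⟩
  by_cases him : z.im % 2 = 0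
  · exact of_im_even him hsum
  · have hi : IsUnit (⟨0, 1⟩ : ℤ[i]) := .of_mul_eq_one ⟨0, -1⟩ (by decide)
    obtain ⟨u, hu, hprim⟩ := of_im_even (w := ⟨0, 1⟩ * z) (by simp; omega) (by simp; omega)
    exact ⟨u * ⟨0, 1⟩, hu.mul hi, by rwa [mul_assoc]⟩

theorem IsPrimary.eq_of_associated {z w : ℤ[i]} (hz : IsPrimary z) (hw : IsPrimary w)
    (h : Associated z w) : z = w := by
  obtain ⟨u, rfl⟩ := h
  obtain ⟨k, hk⟩ := hz
  have hcop : IsCoprime ((⟨1, 1⟩ : ℤ[i]) ^ 3) z := ⟨-k, 1, by linear_combination hk⟩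
  have hdvd : (⟨1, 1⟩ : ℤ[i]) ^ 3 ∣ z * (u - 1) := by
    have := dvd_sub hw ⟨k, hk⟩
    rwa [sub_sub_sub_cancel_right, ← mul_sub_one] at this
  have hu : (u : ℤ[i]) = 1 :=
    GaussianInt.eq_one_of_isUnit_of_dvd_sub_one u.isUnit (by decide)
      (hcop.dvd_of_dvd_mul_left hdvd)
  rw [hu, mul_one]

theorem exists_unique_primary_generator_general (I : Ideal GaussianInt)
    (hcop : I ⊔ Ideal.span {(2 : GaussianInt)} = ⊤) :
    ∃! g : GaussianInt, I = Ideal.span {g} ∧ IsPrimary g := by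
  obtain ⟨z, rfl⟩ : ∃ z, I = Ideal.span {z} :=
    ⟨_, (Submodule.IsPrincipal.span_singleton_generator I).symm⟩
  have hz : IsCoprime z 2 := by
    rwa [← Ideal.isCoprime_span_singleton_iff, Ideal.isCoprime_iff_sup_eq]
  obtain ⟨u, hu, hprim⟩ :=
    exists_isUnit_mul_isPrimary (GaussianInt.re_add_im_emod_two_of_isCoprime_two hz)
  have hassoc : Associated (u * z) z := associated_unit_mul_left z u hu
  refine ⟨u * z, ⟨Ideal.span_singleton_eq_span_singleton.mpr hassoc.symm, hprim⟩, ?_⟩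
  rintro w ⟨hspan, hw⟩
  exact (hprim.eq_of_associated hw
    (hassoc.trans (Ideal.span_singleton_eq_span_singleton.mp hspan))).symm

/-- every nonzero ideal of `ℤ[i]` coprime to `2` has a unique generator
congruent to `1` modulo `(1+i)^3`. -/
theorem exists_unique_primary_generator (I : Ideal GaussianInt) (hI : I ≠ ⊥)
    (hcop : I ⊔ Ideal.span {(2 : GaussianInt)} = ⊤) :
    ∃! g : GaussianInt, I = Ideal.span {g} ∧ IsPrimary g :=
  exists_unique_primary_generator_general I hcop
end
end

section
/- For a primary element n = a+bi ∈ ℤ[i] with a ≡ 1 (mod 4) (equivalently (-1)^((N(n)-1)/4) = 1), the supplement law gives (i/n)₄ = i^((1-a)/2) = (-1)^((a²-1)/8). -/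
noncomputable section
open Complex
open scoped ComplexConjugate Classical

/-!
For a prime `ϖ` of odd norm the four fourth roots of unity stay distinct modulo `ϖ`, since their
differences have norm dividing `4`; hence `(i/ϖ)₄ = i^((N ϖ - 1)/4)`. Odd norms are `≡ 1 (mod 4)`,
and on such numbers `m ↦ i^((m - 1)/4)` is multiplicative, so `(i/n)₄ = i^((N n - 1)/4)` for every
`n` of odd norm. For primary `n = a + bi` with `a ≡ 1 (mod 4)` one has `4 ∣ b`, and writing
`a = 4s + 1`, `b = 4t`, all three expressions of the statement equal `(-1)^s`.
-/

open Zsqrtd UniqueFactorizationMonoid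

lemma Nat.mul_self_add_mul_self_mod_four {x y : ℕ} (h : Odd (x * x + y * y)) :
    (x * x + y * y) % 4 = 1 := by
  rw [Nat.odd_iff, ← Nat.mod_mod_of_dvd _ (by norm_num : 2 ∣ 4)] at h
  have hx := Nat.mod_lt x (by norm_num : 4 > 0)
  have hy := Nat.mod_lt y (by norm_num : 4 > 0)
  rw [Nat.add_mod, Nat.mul_mod, Nat.mul_mod y] at h ⊢
  interval_cases x % 4 <;> interval_cases y % 4 <;> simp_all

lemma pow_pred_div_four_mul {M : Type*} [Monoid M] {g : M} (hg : g ^ 4 = 1) {x y : ℕ}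
    (hx : x % 4 = 1) (hy : y % 4 = 1) :
    g ^ ((x * y - 1) / 4) = g ^ ((x - 1) / 4) * g ^ ((y - 1) / 4) := by
  obtain ⟨u, rfl⟩ : ∃ u, x = 4 * u + 1 := ⟨x / 4, by omega⟩
  obtain ⟨v, rfl⟩ : ∃ v, y = 4 * v + 1 := ⟨y / 4, by omega⟩
  have hxy : ((4 * u + 1) * (4 * v + 1) - 1) / 4 = u + v + 4 * (u * v) := by ring_nf; omega
  rw [hxy, Nat.add_sub_cancel, Nat.add_sub_cancel, Nat.mul_div_cancel_left u (by norm_num),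
    Nat.mul_div_cancel_left v (by norm_num), pow_add, pow_mul, hg, one_pow, mul_one, pow_add]

lemma Multiset.prod_map_pow_pred_div_four {M : Type*} [CommMonoid M] {g : M} (hg : g ^ 4 = 1)
    (s : Multiset ℕ) (hs : ∀ m ∈ s, m % 4 = 1) :
    (s.map fun m => g ^ ((m - 1) / 4)).prod = g ^ ((s.prod - 1) / 4) := by
  induction s using Multiset.induction with
  | empty => simp
  | cons m s ih =>
    have hm : m % 4 = 1 := hs m (Multiset.mem_cons_self m s)
    have hs' : ∀ x ∈ s, x % 4 = 1 := fun x hx => hs x (Multiset.mem_cons_of_mem hx)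
    have hprod : s.prod % 4 = 1 :=
      Multiset.prod_induction (· % 4 = 1) s (fun x y hx hy => by rw [Nat.mul_mod, hx, hy]) rfl hs'
    rw [Multiset.map_cons, Multiset.prod_cons, Multiset.prod_cons, ih hs',
      pow_pred_div_four_mul hg hm hprod]

lemma neg_one_zpow_eq_of_even_sub {K : Type*} [DivisionRing K] {m k : ℤ} (h : Even (m - k)) :
    (-1 : K) ^ m = (-1) ^ k := by
  rw [← Int.cast_negOnePow, ← Int.cast_negOnePow, (Int.negOnePow_eq_iff m k).mpr h]

lemma Complex.I_zpow_two_mul (k : ℤ) : I ^ (2 * k) = (-1) ^ k := by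
  rw [zpow_mul, zpow_two, I_mul_I]

namespace GaussianInt

lemma natAbs_norm_mod_four {z : GaussianInt} (h : Odd z.norm.natAbs) : z.norm.natAbs % 4 = 1 := by
  rw [natAbs_norm_eq] at h ⊢
  exact Nat.mul_self_add_mul_self_mod_four h

lemma sqrtd_pow_four : (sqrtd : GaussianInt) ^ 4 = 1 := by decide

lemma sqrtd_pow_mem (k : ℕ) :
    (sqrtd : GaussianInt) ^ k ∈ ({1, -1, ⟨0, 1⟩, ⟨0, -1⟩} : Set GaussianInt) := by
  rw [pow_eq_pow_mod k sqrtd_pow_four]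
  have hk := Nat.mod_lt k (by norm_num : 4 > 0)
  simp only [Set.mem_insert_iff, Set.mem_singleton_iff]
  interval_cases k % 4 <;> decide

lemma natAbs_norm_sub_dvd_four {ζ₁ ζ₂ : GaussianInt}
    (h₁ : ζ₁ ∈ ({1, -1, ⟨0, 1⟩, ⟨0, -1⟩} : Set GaussianInt))
    (h₂ : ζ₂ ∈ ({1, -1, ⟨0, 1⟩, ⟨0, -1⟩} : Set GaussianInt)) (hne : ζ₁ ≠ ζ₂) :
    (ζ₁ - ζ₂).norm.natAbs ∣ 4 := by
  simp only [Set.mem_insert_iff, Set.mem_singleton_iff] at h₁ h₂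
  rcases h₁ with rfl | rfl | rfl | rfl <;> rcases h₂ with rfl | rfl | rfl | rfl <;>
    first | exact absurd rfl hne | decide

lemma eq_of_dvd_sub_of_mem {ϖ ζ₁ ζ₂ : GaussianInt} (hϖ : ¬IsUnit ϖ) (hodd : Odd ϖ.norm.natAbs)
    (h₁ : ζ₁ ∈ ({1, -1, ⟨0, 1⟩, ⟨0, -1⟩} : Set GaussianInt))
    (h₂ : ζ₂ ∈ ({1, -1, ⟨0, 1⟩, ⟨0, -1⟩} : Set GaussianInt)) (hdvd : ϖ ∣ ζ₁ - ζ₂) : ζ₁ = ζ₂ := by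
  by_contra hne
  have h4 : ϖ.norm.natAbs ∣ 4 := (Int.natAbs_dvd_natAbs.mpr (map_dvd normMonoidHom hdvd)).trans
    (natAbs_norm_sub_dvd_four h₁ h₂ hne)
  have h1 : ϖ.norm.natAbs = 1 :=
    Nat.Coprime.eq_one_of_dvd ((Nat.coprime_two_left.mpr hodd).pow_left 2).symm h4
  exact hϖ (norm_eq_one_iff.mp h1)

lemma toComplex_sqrtd : toComplex sqrtd = I := by
  simp [toComplex_def]

end GaussianInt

lemma quarticSymbolPrime_sqrtd {ϖ : GaussianInt} (hϖ : ¬IsUnit ϖ) (hodd : Odd ϖ.norm.natAbs) :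
    quarticSymbolPrime sqrtd ϖ = sqrtd ^ ((ϖ.norm.natAbs - 1) / 4) := by
  have hndvd : ¬ϖ ∣ sqrtd := fun h => hϖ (isUnit_of_dvd_unit h
    (IsUnit.of_pow_eq_one GaussianInt.sqrtd_pow_four (by norm_num)))
  have hex : ∃ ζ : GaussianInt, ζ ∈ ({1, -1, ⟨0, 1⟩, ⟨0, -1⟩} : Set GaussianInt) ∧
      ϖ ∣ sqrtd ^ ((ϖ.norm.natAbs - 1) / 4) - ζ :=
    ⟨_, GaussianInt.sqrtd_pow_mem _, by rw [sub_self]; exact dvd_zero ϖ⟩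
  rw [quarticSymbolPrime, if_neg hndvd, dif_pos hex]
  exact (GaussianInt.eq_of_dvd_sub_of_mem hϖ hodd (GaussianInt.sqrtd_pow_mem _)
    hex.choose_spec.1 hex.choose_spec.2).symm

theorem quarticSymbol_sqrtd {n : GaussianInt} (hn : n ≠ 0) (hodd : Odd n.norm.natAbs) :
    quarticSymbol sqrtd n = sqrtd ^ ((n.norm.natAbs - 1) / 4) := by
  let N : GaussianInt →* ℕ := Int.natAbsHom.toMonoidHom.comp normMonoidHom
  have hfactors : ∀ ϖ ∈ factors n, Odd (N ϖ) := fun ϖ hϖ =>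
    hodd.of_dvd_nat (map_dvd N (dvd_of_mem_factors hϖ))
  have hprod : ((factors n).map N).prod = N n := by
    rw [← map_multiset_prod]
    exact congrArg Int.natAbs (norm_eq_of_associated (by norm_num) (factors_prod hn))
  rw [quarticSymbol, if_neg hn, Multiset.map_congr rfl fun ϖ hϖ =>
    quarticSymbolPrime_sqrtd (prime_of_factor ϖ hϖ).not_isUnit (hfactors ϖ hϖ)]
  change ((factors n).map ((fun m => sqrtd ^ ((m - 1) / 4)) ∘ N)).prod = sqrtd ^ ((N n - 1) / 4)
  rw [← Multiset.map_map, Multiset.prod_map_pow_pred_div_four GaussianInt.sqrtd_pow_four, hprod]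
  simp only [Multiset.mem_map]
  rintro _ ⟨ϖ, hϖ, rfl⟩
  exact GaussianInt.natAbs_norm_mod_four (hfactors ϖ hϖ)

lemma IsPrimary.four_dvd_re_add_im_sub_one {n : GaussianInt} (h : IsPrimary n) :
    4 ∣ n.re + n.im - 1 := by
  obtain ⟨c, hc⟩ := h
  have hre := congrArg Zsqrtd.re hc
  have him := congrArg Zsqrtd.im hc
  simp only [show (⟨1, 1⟩ : GaussianInt) ^ 3 = ⟨-2, 2⟩ by decide, re_sub, im_sub, re_one, im_one,
    re_mul, im_mul] at hre him
  omega

/-- for primary `n = a+bi` with `a ≡ 1 (mod 4)`, the supplement law gives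
`(i/n)₄ = i^((1-a)/2) = (-1)^((a²-1)/8)`. -/
theorem supplement_i_symbol (a b : ℤ) (h : IsPrimary (⟨a, b⟩ : GaussianInt))
    (ha : a ≡ 1 [ZMOD 4]) :
    GaussianInt.toComplex (quarticSymbol ⟨0, 1⟩ (⟨a, b⟩ : GaussianInt)) = I ^ ((1 - a) / 2) ∧
      (I : ℂ) ^ ((1 - a) / 2) = (-1 : ℂ) ^ ((a ^ 2 - 1) / 8) := by
  obtain ⟨s, rfl⟩ : ∃ s, a = 4 * s + 1 := ⟨a / 4, by rw [Int.ModEq] at ha; omega⟩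
  obtain ⟨t, rfl⟩ : ∃ t, b = 4 * t := by
    have : 4 ∣ (4 * s + 1) + b - 1 := h.four_dvd_re_add_im_sub_one
    exact ⟨b / 4, by omega⟩
  set n : GaussianInt := ⟨4 * s + 1, 4 * t⟩
  have hnorm : (n.norm.natAbs : ℤ) = 4 * (2 * (2 * (s ^ 2 + t ^ 2) + s)) + 1 := by
    rw [GaussianInt.abs_natCast_norm, Zsqrtd.norm_def]; ring
  have hodd : Odd n.norm.natAbs := by
    rw [← Int.odd_coe_nat, hnorm]; exact ⟨2 * (2 * (2 * (s ^ 2 + t ^ 2) + s)), by ring⟩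
  have hn : n ≠ 0 := fun h0 => by have := congrArg Zsqrtd.re h0; simp [n] at this; omega
  have hexp : (((n.norm.natAbs - 1) / 4 : ℕ) : ℤ) = 2 * (2 * (s ^ 2 + t ^ 2) + s) := by omega
  have hhalf : (1 - (4 * s + 1)) / 2 = 2 * -s := by omega
  have hoct : ((4 * s + 1) ^ 2 - 1) / 8 = 2 * s ^ 2 + s := by
    rw [show (4 * s + 1) ^ 2 - 1 = 8 * (2 * s ^ 2 + s) by ring]; omega
  rw [hhalf, Complex.I_zpow_two_mul, hoct]
  refine ⟨?_, neg_one_zpow_eq_of_even_sub ⟨-(s ^ 2 + s), by ring⟩⟩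
  rw [show (⟨0, 1⟩ : GaussianInt) = sqrtd from rfl, quarticSymbol_sqrtd hn hodd, map_pow,
    GaussianInt.toComplex_sqrtd, ← zpow_natCast, hexp, Complex.I_zpow_two_mul]
  exact neg_one_zpow_eq_of_even_sub ⟨s ^ 2 + t ^ 2 + s, by ring⟩
end
end

section
/- For odd coprime rational integers a, b ∈ ℤ with a ≡ 1 (mod 2) and gcd(a, 2b) = 1, the quartic residue symbol of b with respect to a (computed in ℤ[i]) equals 1: (b/a)₄ = 1. -/
noncomputable section
open Complex
open scoped ComplexConjugate Classical

/-!
The symbol is multiplicative in the modulus, so it suffices to treat an odd rational prime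
`p ∤ b`. If `p ≡ 3 (mod 4)`, then `p` stays prime in `ℤ[i]`, `N(p) = p²`, and `(p² - 1)/4` is a
multiple of `p - 1`, so Fermat's little theorem gives `b^((p² - 1)/4) ≡ 1 (mod p)`. If
`p ≡ 1 (mod 4)`, then `p = π π̄` with `N(π) = p`; if `b^((p - 1)/4) ≡ ζ (mod π)`, conjugating
(`b` is rational) gives `b^((p - 1)/4) ≡ ζ̄ (mod π̄)`, so `(b/p)₄ = ζ ζ̄ = 1`.
-/

open UniqueFactorizationMonoid

namespace GaussianInt

theorem isUnit_iff_mem_fourthRoots {ζ : GaussianInt} :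
    IsUnit ζ ↔ ζ ∈ ({1, -1, ⟨0, 1⟩, ⟨0, -1⟩} : Set GaussianInt) := by
  rw [← Zsqrtd.norm_eq_one_iff' (by norm_num)]
  obtain ⟨x, y⟩ := ζ
  simp only [Zsqrtd.norm_def, Set.mem_insert_iff, Set.mem_singleton_iff, Zsqrtd.ext_iff,
    Zsqrtd.re_one, Zsqrtd.im_one, Zsqrtd.re_neg, Zsqrtd.im_neg]
  constructor
  · intro h
    have hx : -1 ≤ x ∧ x ≤ 1 := by constructor <;> nlinarith [mul_self_nonneg y]
    have hy : -1 ≤ y ∧ y ≤ 1 := by constructor <;> nlinarith [mul_self_nonneg x]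
    obtain ⟨hx₁, hx₂⟩ := hx
    obtain ⟨hy₁, hy₂⟩ := hy
    interval_cases x <;> interval_cases y <;> simp_all
  · rintro (⟨rfl, rfl⟩ | ⟨rfl, rfl⟩ | ⟨rfl, rfl⟩ | ⟨rfl, rfl⟩) <;> norm_num

theorem mul_star_of_isUnit {ζ : GaussianInt} (hζ : IsUnit ζ) : ζ * star ζ = 1 := by
  rw [← Zsqrtd.norm_eq_mul_conj, (Zsqrtd.norm_eq_one_iff' (by norm_num) ζ).mpr hζ, Int.cast_one]

theorem sub_dvd_four_of_isUnit {ζ₁ ζ₂ : GaussianInt} (h₁ : IsUnit ζ₁) (h₂ : IsUnit ζ₂)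
    (hne : ζ₁ ≠ ζ₂) : ζ₁ - ζ₂ ∣ 4 := by
  have hnorm : Zsqrtd.norm (ζ₁ - ζ₂) ∣ 4 := by
    rw [isUnit_iff_mem_fourthRoots] at h₁ h₂
    simp only [Set.mem_insert_iff, Set.mem_singleton_iff] at h₁ h₂
    rcases h₁ with rfl | rfl | rfl | rfl <;> rcases h₂ with rfl | rfl | rfl | rfl <;>
      first | exact absurd rfl hne | decide
  calc ζ₁ - ζ₂ ∣ (Zsqrtd.norm (ζ₁ - ζ₂) : GaussianInt) := ⟨_, Zsqrtd.norm_eq_mul_conj _⟩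
    _ ∣ 4 := by exact_mod_cast hnorm

theorem prime_of_natAbs_norm_prime {π : GaussianInt} (h : (Zsqrtd.norm π).natAbs.Prime) :
    Prime π := by
  refine irreducible_iff_prime.mp ⟨fun hu => h.ne_one (Zsqrtd.norm_eq_one_iff.mpr hu), ?_⟩
  rintro x y rfl
  rw [Zsqrtd.norm_mul, Int.natAbs_mul, Nat.prime_mul_iff] at h
  rcases h with ⟨-, hy⟩ | ⟨-, hx⟩
  · exact Or.inr (Zsqrtd.norm_eq_one_iff.mp hy)
  · exact Or.inl (Zsqrtd.norm_eq_one_iff.mp hx)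

theorem exists_isUnit_dvd_sub_of_dvd_pow_four_sub_one {π t : GaussianInt} (hπ : Prime π)
    (h : π ∣ t ^ 4 - 1) : ∃ ζ, IsUnit ζ ∧ π ∣ t - ζ := by
  have hfactor : t ^ 4 - 1 = (t - 1) * (t - -1) * (t - ⟨0, 1⟩) * (t - ⟨0, -1⟩) := by
    have hi : (⟨0, 1⟩ : GaussianInt) ^ 2 = -1 := by decide
    have hneg : (⟨0, -1⟩ : GaussianInt) = -⟨0, 1⟩ := by decide
    rw [hneg]
    linear_combination (t ^ 2 - 1) * hi
  rw [hfactor] at h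
  simp only [hπ.dvd_mul] at h
  rcases h with ((h | h) | h) | h <;>
    exact ⟨_, isUnit_iff_mem_fourthRoots.mpr (by simp), h⟩

theorem natCast_dvd_pow_sub_one {p : ℕ} (hp : p.Prime) {b : ℤ} (hb : IsCoprime (p : ℤ) b)
    {e : ℕ} (he : p - 1 ∣ e) : (p : GaussianInt) ∣ (b : GaussianInt) ^ e - 1 := by
  obtain ⟨m, rfl⟩ := he
  have hfermat : (p : ℤ) ∣ b ^ ((p - 1) * m) - 1 := by
    rw [pow_mul]
    exact (Int.prime_dvd_pow_sub_one hp hb.symm).trans (sub_one_dvd_pow_sub_one _ _)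
  exact_mod_cast hfermat

theorem isCoprime_of_dvd_natCast {ϖ : GaussianInt} {p : ℕ} {c : ℤ} (hϖ : ϖ ∣ p)
    (h : IsCoprime (p : ℤ) c) : IsCoprime ϖ (c : GaussianInt) :=
  (h.map (Int.castRingHom GaussianInt)).of_isCoprime_of_dvd_left (by simpa using hϖ)

end GaussianInt

open GaussianInt

theorem quarticSymbolPrime_eq_of_dvd_sub {a ϖ ζ : GaussianInt} (hϖ : ¬IsUnit ϖ)
    (ha : IsCoprime ϖ (4 * a)) (hζ : IsUnit ζ)
    (hd : ϖ ∣ a ^ (((Zsqrtd.norm ϖ).natAbs - 1) / 4) - ζ) :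
    quarticSymbolPrime a ϖ = ζ := by
  have hϖa : ¬ϖ ∣ a := fun h => hϖ (ha.isUnit_of_dvd' dvd_rfl (h.mul_left 4))
  have hϖ4 : ¬ϖ ∣ 4 := fun h => hϖ (ha.isUnit_of_dvd' dvd_rfl (h.mul_right a))
  have hex : ∃ ζ' : GaussianInt, ζ' ∈ ({1, -1, ⟨0, 1⟩, ⟨0, -1⟩} : Set GaussianInt) ∧
      ϖ ∣ a ^ (((Zsqrtd.norm ϖ).natAbs - 1) / 4) - ζ' :=
    ⟨ζ, isUnit_iff_mem_fourthRoots.mp hζ, hd⟩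
  rw [quarticSymbolPrime, if_neg hϖa, dif_pos hex]
  obtain ⟨hζ'S, hζ'd⟩ := hex.choose_spec
  by_contra hne
  have hdiff : ϖ ∣ hex.choose - ζ := by simpa using dvd_sub hd hζ'd
  exact hϖ4 (hdiff.trans (sub_dvd_four_of_isUnit (isUnit_iff_mem_fourthRoots.mpr hζ'S) hζ hne))

theorem quarticSymbolPrime_congr_right (a : GaussianInt) {ϖ ϖ' : GaussianInt}
    (h : Associated ϖ ϖ') : quarticSymbolPrime a ϖ = quarticSymbolPrime a ϖ' := by
  obtain ⟨u, rfl⟩ := h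
  have hnorm : Zsqrtd.norm (ϖ * (u : GaussianInt)) = Zsqrtd.norm ϖ := by
    rw [Zsqrtd.norm_mul, (Zsqrtd.norm_eq_one_iff' (by norm_num) _).mpr u.isUnit, mul_one]
  simp only [quarticSymbolPrime, Units.mul_right_dvd, hnorm]

theorem prod_map_quarticSymbolPrime_eq (a : GaussianInt) {s t : Multiset GaussianInt}
    (h : Multiset.Rel Associated s t) :
    (s.map (quarticSymbolPrime a)).prod = (t.map (quarticSymbolPrime a)).prod :=
  congrArg Multiset.prod <| Multiset.rel_eq.mp <|
    Multiset.rel_map.mpr (h.mono fun _ _ _ _ => quarticSymbolPrime_congr_right a)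

theorem quarticSymbol_zero_right (a : GaussianInt) : quarticSymbol a 0 = 0 := if_pos rfl

theorem quarticSymbol_of_isUnit (a : GaussianInt) {n : GaussianInt} (hn : IsUnit n) :
    quarticSymbol a n = 1 := by
  rw [quarticSymbol, if_neg hn.ne_zero, factors_of_isUnit hn, Multiset.map_zero,
    Multiset.prod_zero]

theorem quarticSymbol_of_prime (a : GaussianInt) {ϖ : GaussianInt} (hϖ : Prime ϖ) :
    quarticSymbol a ϖ = quarticSymbolPrime a ϖ := by
  obtain ⟨ϖ', hassoc, hfactors⟩ := factors_eq_singleton_of_irreducible hϖ.irreducible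
  rw [quarticSymbol, if_neg hϖ.ne_zero, hfactors, Multiset.map_singleton, Multiset.prod_singleton,
    quarticSymbolPrime_congr_right a hassoc]

theorem quarticSymbol_mul (a m n : GaussianInt) :
    quarticSymbol a (m * n) = quarticSymbol a m * quarticSymbol a n := by
  rcases eq_or_ne m 0 with rfl | hm
  · rw [zero_mul, quarticSymbol_zero_right, zero_mul]
  rcases eq_or_ne n 0 with rfl | hn
  · rw [mul_zero, quarticSymbol_zero_right, mul_zero]
  rw [quarticSymbol, if_neg (mul_ne_zero hm hn),
    prod_map_quarticSymbolPrime_eq a (factors_mul hm hn), Multiset.map_add, Multiset.prod_add,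
    quarticSymbol, if_neg hm, quarticSymbol, if_neg hn]

theorem quarticSymbol_congr_right (a : GaussianInt) {m n : GaussianInt} (h : Associated m n) :
    quarticSymbol a m = quarticSymbol a n := by
  obtain ⟨u, rfl⟩ := h
  rw [quarticSymbol_mul, quarticSymbol_of_isUnit a u.isUnit, mul_one]

theorem quarticSymbol_natCast_of_mod_four_eq_three (b : ℤ) {p : ℕ} [hp : Fact p.Prime]
    (hp3 : p % 4 = 3) (hb : IsCoprime (p : ℤ) (4 * b)) : quarticSymbol b p = 1 := by
  have hπ : Prime (p : GaussianInt) := (prime_iff_mod_four_eq_three_of_nat_prime p).mpr hp3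
  have hexp : p - 1 ∣ ((Zsqrtd.norm (p : GaussianInt)).natAbs - 1) / 4 := by
    have hsq : p * p - 1 = (p - 1) * (p + 1) := by
      simpa [mul_comm] using Nat.mul_self_sub_mul_self_eq p 1
    rw [Zsqrtd.norm_natCast, ← Nat.cast_mul, Int.natAbs_natCast, hsq,
      Nat.mul_div_assoc _ (by omega : 4 ∣ p + 1)]
    exact dvd_mul_right _ _
  rw [quarticSymbol_of_prime _ hπ]
  have hcop : IsCoprime (p : GaussianInt) (4 * (b : GaussianInt)) := by
    exact_mod_cast isCoprime_of_dvd_natCast dvd_rfl hb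
  exact quarticSymbolPrime_eq_of_dvd_sub hπ.not_isUnit hcop isUnit_one
    (natCast_dvd_pow_sub_one hp.out hb.of_mul_right_right hexp)

theorem quarticSymbol_natCast_of_mod_four_eq_one (b : ℤ) {p : ℕ} [hp : Fact p.Prime]
    (hp1 : p % 4 = 1) (hb : IsCoprime (p : ℤ) (4 * b)) : quarticSymbol b p = 1 := by
  obtain ⟨x, y, hxy⟩ := Nat.Prime.sq_add_sq (p := p) (by omega)
  set π : GaussianInt := ⟨x, y⟩
  have hnorm : Zsqrtd.norm π = p := by
    rw [Zsqrtd.norm_def, ← hxy]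
    push_cast
    ring
  have hnorm' : Zsqrtd.norm (star π) = p := by rw [Zsqrtd.norm_conj, hnorm]
  have hπ : Prime π := prime_of_natAbs_norm_prime (by rw [hnorm, Int.natAbs_natCast]; exact hp.out)
  have hπ' : Prime (star π) :=
    prime_of_natAbs_norm_prime (by rw [hnorm', Int.natAbs_natCast]; exact hp.out)
  have hsplit : (p : GaussianInt) = π * star π := by
    rw [← Zsqrtd.norm_eq_mul_conj, hnorm, Int.cast_natCast]
  set k := (p - 1) / 4
  obtain ⟨ζ, hζ, hπζ⟩ : ∃ ζ, IsUnit ζ ∧ π ∣ (b : GaussianInt) ^ k - ζ := by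
    refine exists_isUnit_dvd_sub_of_dvd_pow_four_sub_one hπ ?_
    rw [← pow_mul]
    exact (hsplit ▸ dvd_mul_right π (star π)).trans
      (natCast_dvd_pow_sub_one hp.out hb.of_mul_right_right ⟨1, by omega⟩)
  have hπζ' : star π ∣ (b : GaussianInt) ^ k - star ζ := by
    simpa only [map_sub, map_pow, map_intCast, starRingEnd_apply] using
      map_dvd (starRingEnd GaussianInt) hπζ
  have hcop (ϖ : GaussianInt) (hϖ : ϖ ∣ π * star π) : IsCoprime ϖ (4 * (b : GaussianInt)) := by
    exact_mod_cast isCoprime_of_dvd_natCast (hsplit ▸ hϖ) hb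
  rw [hsplit, quarticSymbol_mul, quarticSymbol_of_prime _ hπ, quarticSymbol_of_prime _ hπ',
    quarticSymbolPrime_eq_of_dvd_sub hπ.not_isUnit (hcop π (dvd_mul_right _ _)) hζ
      (by rw [hnorm, Int.natAbs_natCast]; exact hπζ),
    quarticSymbolPrime_eq_of_dvd_sub hπ'.not_isUnit (hcop _ (dvd_mul_left _ _)) hζ.star
      (by rw [hnorm', Int.natAbs_natCast]; exact hπζ'),
    mul_star_of_isUnit hζ]

theorem quarticSymbol_natCast_of_prime (b : ℤ) {p : ℕ} [hp : Fact p.Prime]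
    (hb : IsCoprime (p : ℤ) (4 * b)) : quarticSymbol b p = 1 := by
  have hodd : p % 2 = 1 := by
    refine hp.out.eq_two_or_odd.resolve_left ?_
    rintro rfl
    have h2 : IsUnit (2 : ℤ) := hb.isUnit_of_dvd' dvd_rfl ⟨2 * b, by ring⟩
    exact absurd (Int.isUnit_iff.mp h2) (by omega)
  rcases (by omega : p % 4 = 1 ∨ p % 4 = 3) with h4 | h4
  · exact quarticSymbol_natCast_of_mod_four_eq_one b h4 hb
  · exact quarticSymbol_natCast_of_mod_four_eq_three b h4 hb

theorem quarticSymbol_intCast_of_prime (b : ℤ) {p : ℤ} (hp : Prime p)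
    (hb : IsCoprime p (4 * b)) : quarticSymbol b p = 1 := by
  have : Fact p.natAbs.Prime := ⟨Int.prime_iff_natAbs_prime.mp hp⟩
  have hassoc : Associated (p : GaussianInt) (p.natAbs : GaussianInt) := by
    simpa using (Int.associated_natAbs p).map (Int.castRingHom GaussianInt)
  rw [quarticSymbol_congr_right _ hassoc]
  exact_mod_cast quarticSymbol_natCast_of_prime b
    (hb.of_isCoprime_of_dvd_left (Int.natAbs_dvd.mpr dvd_rfl))

theorem quartic_symbol_rational_trivial_general (a b : ℤ) (h : Int.gcd a (2 * b) = 1) :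
    quarticSymbol (b : GaussianInt) (a : GaussianInt) = 1 := by
  rw [← Int.isCoprime_iff_gcd_eq_one] at h
  replace h : IsCoprime a (4 * b) := by
    rw [show 4 * b = 2 * (2 * b) by ring]
    exact h.of_mul_right_left.mul_right h
  induction a using induction_on_prime with
  | h₁ => exact absurd (Int.isUnit_iff.mp (isCoprime_zero_left.mp h)) (by omega)
  | h₂ u hu => exact quarticSymbol_of_isUnit _ (hu.map (Int.castRingHom GaussianInt))
  | h₃ a p _ hp ih =>
    obtain ⟨hpb, hab⟩ := IsCoprime.mul_left_iff.mp h
    rw [Int.cast_mul, quarticSymbol_mul, quarticSymbol_intCast_of_prime b hp hpb, ih hab, one_mul]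

/-- for odd `a ∈ ℤ` with `gcd(a, 2b) = 1`, the quartic residue symbol satisfies
`(b/a)₄ = 1`. -/
theorem quartic_symbol_rational_trivial (a b : ℤ) (ha : Odd a) (h : Int.gcd a (2 * b) = 1) :
    quarticSymbol (b : GaussianInt) (a : GaussianInt) = 1 :=
  quartic_symbol_rational_trivial_general a b h
end
end

section
/- For odd coprime n₁, n₂ ∈ ℤ[i] and any r ∈ ℤ[i], the twisted quartic Gauss sum satisfies g(r, n₁n₂) = (n₂/n₁)₄ (n₁/n₂)₄ g(r, n₁) g(r, n₂). -/
noncomputable section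
open Complex
open scoped ComplexConjugate Classical

/-!
Writing `x = n₂ y + n₁ z` identifies `ℤ[i]/(n₁n₂)` with `ℤ[i]/(n₁) × ℤ[i]/(n₂)` (Chinese remainder
theorem). Then `r x / (n₁n₂) = r y / n₁ + r z / n₂`, so the additive character splits, and since
the quartic symbol is multiplicative in both arguments and depends on its numerator only modulo
the denominator, `(x/n₁n₂)₄ = (n₂/n₁)₄ (y/n₁)₄ · (n₁/n₂)₄ (z/n₂)₄`.

Multiplicativity in the numerator comes down to an odd prime `ϖ`: there `a ^ ((Nϖ - 1)/4)` is
congruent to exactly one fourth root of unity, since its fourth power is `1` in the residue field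
of order `Nϖ ≡ 1 mod 4`, and distinct fourth roots of unity differ by a divisor of `2`.
-/

open UniqueFactorizationMonoid

namespace GaussianInt

def reImEquiv : GaussianInt ≃ₗ[ℤ] (Fin 2 → ℤ) :=
  AddEquiv.toIntLinearEquiv
    { toFun := fun z => ![z.re, z.im]
      invFun := fun f => ⟨f 0, f 1⟩
      left_inv := fun _ => rfl
      right_inv := fun f => by ext i; fin_cases i <;> rfl
      map_add' := fun _ _ => by ext i; fin_cases i <;> rfl }

instance : Module.Free ℤ GaussianInt := .of_equiv reImEquiv.symm

instance : Module.Finite ℤ GaussianInt := .equiv reImEquiv.symm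

theorem reImEquiv_apply (z : GaussianInt) : reImEquiv z = ![z.re, z.im] := rfl

theorem reImEquiv_symm_apply (f : Fin 2 → ℤ) : reImEquiv.symm f = ⟨f 0, f 1⟩ := rfl

theorem algebraNorm_eq_norm (z : GaussianInt) : Algebra.norm ℤ z = z.norm := by
  rw [Algebra.norm_eq_matrix_det (Module.Basis.ofEquivFun reImEquiv), Matrix.det_fin_two]
  simp [Algebra.leftMulMatrix_eq_repr_mul, reImEquiv_apply, reImEquiv_symm_apply, Zsqrtd.norm]

theorem natCard_quotient_span_singleton (n : GaussianInt) :
    Nat.card (GaussianInt ⧸ Ideal.span {n}) = n.norm.natAbs := by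
  rw [← Submodule.cardQuot_apply, ← Ideal.absNorm_apply, Ideal.absNorm_span_singleton,
    algebraNorm_eq_norm]

theorem ne_zero_of_isCoprime_two {n : GaussianInt} (h : IsCoprime n 2) : n ≠ 0 := by
  rintro rfl
  exact absurd (isCoprime_zero_left.mp h) (by rw [← Zsqrtd.norm_eq_one_iff]; decide)

theorem finite_quotient_span_singleton {n : GaussianInt} (hn : n ≠ 0) :
    Finite (GaussianInt ⧸ Ideal.span {n}) :=
  Nat.finite_of_card_ne_zero <| by
    rwa [natCard_quotient_span_singleton, Int.natAbs_ne_zero, Ne, norm_eq_zero]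

end GaussianInt

-- reducible, so that it matches the literal set in `quarticSymbolPrime`
abbrev gaussianFourthRoots : Set GaussianInt := {1, -1, ⟨0, 1⟩, ⟨0, -1⟩}

theorem mul_mem_gaussianFourthRoots {ζ ζ' : GaussianInt} (hζ : ζ ∈ gaussianFourthRoots)
    (hζ' : ζ' ∈ gaussianFourthRoots) : ζ * ζ' ∈ gaussianFourthRoots := by
  simp only [gaussianFourthRoots, Set.mem_insert_iff, Set.mem_singleton_iff] at hζ hζ' ⊢
  rcases hζ with rfl | rfl | rfl | rfl <;> rcases hζ' with rfl | rfl | rfl | rfl <;> decide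

theorem sub_dvd_two_of_mem_gaussianFourthRoots {ζ ζ' : GaussianInt}
    (hζ : ζ ∈ gaussianFourthRoots) (hζ' : ζ' ∈ gaussianFourthRoots) (hne : ζ ≠ ζ') :
    ζ - ζ' ∣ 2 := by
  simp only [gaussianFourthRoots, Set.mem_insert_iff, Set.mem_singleton_iff] at hζ hζ'
  rcases hζ with rfl | rfl | rfl | rfl <;> rcases hζ' with rfl | rfl | rfl | rfl <;>
    first
      | exact absurd rfl hne
      | exact ⟨1, by decide⟩ | exact ⟨-1, by decide⟩ | exact ⟨⟨0, 1⟩, by decide⟩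
      | exact ⟨⟨0, -1⟩, by decide⟩ | exact ⟨⟨1, 1⟩, by decide⟩ | exact ⟨⟨1, -1⟩, by decide⟩
      | exact ⟨⟨-1, 1⟩, by decide⟩ | exact ⟨⟨-1, -1⟩, by decide⟩

theorem prod_sub_gaussianFourthRoots (x : GaussianInt) :
    (x - 1) * (x - -1) * (x - ⟨0, 1⟩) * (x - ⟨0, -1⟩) = x ^ 4 - 1 := by
  have hi : (⟨0, 1⟩ : GaussianInt) ^ 2 = -1 := by decide
  rw [show (⟨0, -1⟩ : GaussianInt) = -⟨0, 1⟩ by decide]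
  linear_combination (1 - x ^ 2) * hi

section ResidueField

variable {ϖ : GaussianInt} (hp : Prime ϖ)
include hp

theorem four_dvd_natAbs_norm_sub_one (h2 : ¬ ϖ ∣ 2) : 4 ∣ ϖ.norm.natAbs - 1 := by
  have := PrincipalIdealRing.isMaximal_of_irreducible hp.irreducible
  let := Ideal.Quotient.field (Ideal.span {ϖ})
  have := GaussianInt.finite_quotient_span_singleton hp.ne_zero
  have := Fintype.ofFinite (GaussianInt ⧸ Ideal.span {ϖ})
  set i := Ideal.Quotient.mk (Ideal.span {ϖ}) ⟨0, 1⟩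
  have hi : i ^ 2 = -1 := by
    rw [← map_pow, show (⟨0, 1⟩ : GaussianInt) ^ 2 = -1 by decide, map_neg, map_one]
  have htwo : (2 : GaussianInt ⧸ Ideal.span {ϖ}) ≠ 0 := by
    rwa [← map_ofNat (Ideal.Quotient.mk _), Ne, Ideal.Quotient.eq_zero_iff_dvd]
  have hord : orderOf i = 2 ^ 2 := by
    refine orderOf_eq_prime_pow (fun h => htwo ?_) ?_
    · linear_combination hi - h
    · rw [show 2 ^ (1 + 1) = 2 * 2 from rfl, pow_mul, hi, neg_one_sq]
  rw [← GaussianInt.natCard_quotient_span_singleton, Nat.card_eq_fintype_card]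
  simpa [hord] using orderOf_dvd_of_pow_eq_one
    (FiniteField.pow_card_sub_one_eq_one i (by rintro h; simp [h] at hi))

theorem dvd_pow_natAbs_norm_sub_one_sub_one {a : GaussianInt} (ha : ¬ ϖ ∣ a) :
    ϖ ∣ a ^ (ϖ.norm.natAbs - 1) - 1 := by
  have := PrincipalIdealRing.isMaximal_of_irreducible hp.irreducible
  let := Ideal.Quotient.field (Ideal.span {ϖ})
  have := GaussianInt.finite_quotient_span_singleton hp.ne_zero
  have := Fintype.ofFinite (GaussianInt ⧸ Ideal.span {ϖ})
  rw [← Ideal.Quotient.eq_zero_iff_dvd] at ha ⊢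
  rw [← GaussianInt.natCard_quotient_span_singleton, Nat.card_eq_fintype_card, map_sub, map_pow,
    FiniteField.pow_card_sub_one_eq_one _ ha, map_one, sub_self]

theorem exists_mem_gaussianFourthRoots_dvd_pow_sub (h2 : ¬ ϖ ∣ 2) {a : GaussianInt}
    (ha : ¬ ϖ ∣ a) :
    ∃ ζ ∈ gaussianFourthRoots, ϖ ∣ a ^ ((ϖ.norm.natAbs - 1) / 4) - ζ := by
  set x := a ^ ((ϖ.norm.natAbs - 1) / 4)
  have hx : x ^ 4 = a ^ (ϖ.norm.natAbs - 1) := by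
    rw [← pow_mul, Nat.div_mul_cancel (four_dvd_natAbs_norm_sub_one hp h2)]
  have hdvd := dvd_pow_natAbs_norm_sub_one_sub_one hp ha
  rw [← hx, ← prod_sub_gaussianFourthRoots] at hdvd
  simp only [hp.dvd_mul] at hdvd
  rcases hdvd with ((h | h) | h) | h
  all_goals exact ⟨_, by simp [gaussianFourthRoots], h⟩

end ResidueField

theorem quarticSymbolPrime_congr_left {ϖ a b : GaussianInt} (h : ϖ ∣ a - b) :
    quarticSymbolPrime a ϖ = quarticSymbolPrime b ϖ := by
  have hpow := h.trans (sub_dvd_pow_sub_pow a b ((ϖ.norm.natAbs - 1) / 4))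
  have hroot (ζ : GaussianInt) : ϖ ∣ a ^ ((ϖ.norm.natAbs - 1) / 4) - ζ ↔
      ϖ ∣ b ^ ((ϖ.norm.natAbs - 1) / 4) - ζ :=
    dvd_iff_dvd_of_dvd_sub (by rwa [sub_sub_sub_cancel_right])
  simp only [quarticSymbolPrime, dvd_iff_dvd_of_dvd_sub h, hroot]

theorem Associated.quarticSymbolPrime_eq {ϖ ϖ' : GaussianInt} (h : Associated ϖ ϖ')
    (a : GaussianInt) : quarticSymbolPrime a ϖ = quarticSymbolPrime a ϖ' := by
  simp only [quarticSymbolPrime, h.dvd_iff_dvd_left,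
    Zsqrtd.norm_eq_of_associated (by norm_num) h]

theorem quarticSymbolPrime_eq_of_dvd {ϖ a ζ : GaussianInt} (h2 : ¬ ϖ ∣ 2) (ha : ¬ ϖ ∣ a)
    (hζ : ζ ∈ gaussianFourthRoots) (hdvd : ϖ ∣ a ^ ((ϖ.norm.natAbs - 1) / 4) - ζ) :
    quarticSymbolPrime a ϖ = ζ := by
  have hex : ∃ ζ ∈ gaussianFourthRoots, ϖ ∣ a ^ ((ϖ.norm.natAbs - 1) / 4) - ζ := ⟨ζ, hζ, hdvd⟩
  rw [quarticSymbolPrime, if_neg ha, dif_pos hex]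
  obtain ⟨hmem, hdvd'⟩ := hex.choose_spec
  by_contra hne
  exact h2 <| (dvd_sub hdvd hdvd' |>.trans (by rw [sub_sub_sub_cancel_left])).trans
    (sub_dvd_two_of_mem_gaussianFourthRoots hmem hζ hne)

theorem quarticSymbolPrime_spec {ϖ a : GaussianInt} (hp : Prime ϖ) (h2 : ¬ ϖ ∣ 2)
    (ha : ¬ ϖ ∣ a) : quarticSymbolPrime a ϖ ∈ gaussianFourthRoots ∧
      ϖ ∣ a ^ ((ϖ.norm.natAbs - 1) / 4) - quarticSymbolPrime a ϖ := by
  obtain ⟨ζ, hζ, hdvd⟩ := exists_mem_gaussianFourthRoots_dvd_pow_sub hp h2 ha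
  rw [quarticSymbolPrime_eq_of_dvd h2 ha hζ hdvd]
  exact ⟨hζ, hdvd⟩

theorem quarticSymbolPrime_mul_left {ϖ : GaussianInt} (hp : Prime ϖ) (h2 : ¬ ϖ ∣ 2)
    (a b : GaussianInt) :
    quarticSymbolPrime (a * b) ϖ = quarticSymbolPrime a ϖ * quarticSymbolPrime b ϖ := by
  by_cases ha : ϖ ∣ a
  · simp [quarticSymbolPrime, ha, ha.mul_right b]
  by_cases hb : ϖ ∣ b
  · simp [quarticSymbolPrime, hb, hb.mul_left a]
  obtain ⟨hζa, hda⟩ := quarticSymbolPrime_spec hp h2 ha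
  obtain ⟨hζb, hdb⟩ := quarticSymbolPrime_spec hp h2 hb
  refine quarticSymbolPrime_eq_of_dvd h2 (hp.dvd_mul.not.mpr (not_or.mpr ⟨ha, hb⟩))
    (mul_mem_gaussianFourthRoots hζa hζb) ?_
  set m := (ϖ.norm.natAbs - 1) / 4
  have hsplit : (a * b) ^ m - quarticSymbolPrime a ϖ * quarticSymbolPrime b ϖ =
      b ^ m * (a ^ m - quarticSymbolPrime a ϖ) +
        quarticSymbolPrime a ϖ * (b ^ m - quarticSymbolPrime b ϖ) := by
    ring
  rw [hsplit]
  exact dvd_add (hda.mul_left _) (hdb.mul_left _)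

theorem quarticSymbol_congr_left {n a b : GaussianInt} (h : n ∣ a - b) :
    quarticSymbol a n = quarticSymbol b n := by
  unfold quarticSymbol
  split_ifs
  · rfl
  · exact congrArg _ <| Multiset.map_congr rfl fun ϖ hϖ =>
      quarticSymbolPrime_congr_left ((dvd_of_mem_factors hϖ).trans h)

theorem quarticSymbol_mul_left {n : GaussianInt} (hn : IsCoprime n 2) (a b : GaussianInt) :
    quarticSymbol (a * b) n = quarticSymbol a n * quarticSymbol b n := by
  unfold quarticSymbol
  split_ifs
  · rw [zero_mul]
  · rw [← Multiset.prod_map_mul]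
    refine congrArg _ <| Multiset.map_congr rfl fun ϖ hϖ => ?_
    have hp := prime_of_factor ϖ hϖ
    exact quarticSymbolPrime_mul_left hp
      (fun h2 => hp.not_isUnit (hn.isUnit_of_dvd' (dvd_of_mem_factors hϖ) h2)) a b

theorem quarticSymbol_mul_right (a n₁ n₂ : GaussianInt) :
    quarticSymbol a (n₁ * n₂) = quarticSymbol a n₁ * quarticSymbol a n₂ := by
  rcases eq_or_ne n₁ 0 with rfl | h₁
  · simp [quarticSymbol]
  rcases eq_or_ne n₂ 0 with rfl | h₂
  · simp [quarticSymbol]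
  rw [quarticSymbol, quarticSymbol, quarticSymbol, if_neg (mul_ne_zero h₁ h₂), if_neg h₁,
    if_neg h₂, ← Multiset.prod_add, ← Multiset.map_add]
  exact congrArg _ <| Multiset.rel_eq.mp <| Multiset.rel_map.mpr <|
    (factors_mul h₁ h₂).mono fun _ _ _ _ h => h.quarticSymbolPrime_eq a

section ChineseRemainder

variable {R : Type*} [CommRing R]

theorem dvd_out_mk_sub (n x : R) : n ∣ (Ideal.Quotient.mk (Ideal.span {n}) x).out - x :=
  Ideal.mem_span_singleton.mp <| Ideal.Quotient.eq.mp <| Ideal.Quotient.mk_out _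

theorem bijective_mk_mul_add_mul {a b : R} (hab : IsCoprime a b) :
    Function.Bijective fun p : (R ⧸ Ideal.span {a}) × (R ⧸ Ideal.span {b}) =>
      Ideal.Quotient.mk (Ideal.span {a * b}) (b * p.1.out + a * p.2.out) := by
  constructor
  · rintro ⟨y, z⟩ ⟨y', z'⟩ h
    obtain ⟨c, hc⟩ := Ideal.mem_span_singleton.mp (Ideal.Quotient.eq.mp h)
    have hy : a ∣ b * (y.out - y'.out) := ⟨b * c - z.out + z'.out, by linear_combination hc⟩
    have hz : b ∣ a * (z.out - z'.out) := ⟨a * c - y.out + y'.out, by linear_combination hc⟩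
    rw [← Ideal.Quotient.mk_out y, ← Ideal.Quotient.mk_out y', ← Ideal.Quotient.mk_out z,
      ← Ideal.Quotient.mk_out z', Ideal.Quotient.eq.mpr (Ideal.mem_span_singleton.mpr
        (hab.dvd_of_dvd_mul_left hy)), Ideal.Quotient.eq.mpr (Ideal.mem_span_singleton.mpr
        (hab.symm.dvd_of_dvd_mul_left hz))]
  · intro x
    obtain ⟨u, v, huv⟩ := hab
    obtain ⟨c, hc⟩ := dvd_out_mk_sub a (v * x.out)
    obtain ⟨d, hd⟩ := dvd_out_mk_sub b (u * x.out)
    refine ⟨(Ideal.Quotient.mk _ (v * x.out), Ideal.Quotient.mk _ (u * x.out)), ?_⟩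
    -- `b (v x + a c) + a (u x + b d) = x + a b (c + d)` since `u a + v b = 1`
    exact (Ideal.Quotient.eq.mpr <| Ideal.mem_span_singleton.mpr
      ⟨c + d, by linear_combination b * hc + a * hd + x.out * huv⟩).trans (Ideal.Quotient.mk_out x)

theorem finsum_quotient_span_mul {M : Type*} [AddCommMonoid M] {a b : R} (hab : IsCoprime a b)
    [Finite (R ⧸ Ideal.span {a})] [Finite (R ⧸ Ideal.span {b})] {f : R → M}
    (hf : ∀ x y, a * b ∣ x - y → f x = f y) :
    ∑ᶠ x : R ⧸ Ideal.span {a * b}, f x.out =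
      ∑ᶠ y : R ⧸ Ideal.span {a}, ∑ᶠ z : R ⧸ Ideal.span {b}, f (b * y.out + a * z.out) := by
  refine .trans ?_ (finsum_curry (fun p : (R ⧸ Ideal.span {a}) × (R ⧸ Ideal.span {b}) =>
    f (b * p.1.out + a * p.2.out)) (Set.toFinite _))
  exact (finsum_eq_of_bijective _ (bijective_mk_mul_add_mul hab) fun _ => hf _ _
    (dvd_sub_comm.mp (dvd_out_mk_sub _ _))).symm

end ChineseRemainder

theorem echar_eq_exp_im (z : ℂ) : echar z = exp (2 * Real.pi * I * z.im) := by
  rw [echar, div_sub_div_same, sub_conj]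
  congr 1
  push_cast
  field_simp

theorem echar_add (z w : ℂ) : echar (z + w) = echar z * echar w := by
  rw [echar_eq_exp_im, echar_eq_exp_im, echar_eq_exp_im, ← exp_add, add_im, ofReal_add]
  ring_nf

theorem echar_gaussianInt (g : GaussianInt) : echar g = 1 := by
  rw [echar_eq_exp_im, ← GaussianInt.intCast_im, ofReal_intCast, mul_comm]
  exact exp_int_mul_two_pi_mul_I g.im

def gaussSumTerm (k n x : GaussianInt) : ℂ :=
  GaussianInt.toComplex (quarticSymbol x n) *
    echar (GaussianInt.toComplex k * GaussianInt.toComplex x / GaussianInt.toComplex n)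

theorem gaussSumK_eq_finsum (k n : GaussianInt) :
    gaussSumK k n = ∑ᶠ x : GaussianInt ⧸ Ideal.span {n}, gaussSumTerm k n x.out :=
  rfl

theorem gaussSumTerm_congr {k n x y : GaussianInt} (h : n ∣ x - y) :
    gaussSumTerm k n x = gaussSumTerm k n y := by
  obtain ⟨c, hc⟩ := h
  rcases eq_or_ne n 0 with rfl | hn
  · rw [zero_mul, sub_eq_zero] at hc
    rw [hc]
  have hn' : (n : ℂ) ≠ 0 := GaussianInt.toComplex_eq_zero.not.mpr hn
  have harg : (k : ℂ) * x / n = k * y / n + (k * c : GaussianInt) := by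
    rw [sub_eq_iff_eq_add'.mp hc]
    simp only [map_add, map_mul]
    field_simp
  rw [gaussSumTerm, gaussSumTerm, quarticSymbol_congr_left ⟨c, hc⟩, harg, echar_add,
    echar_gaussianInt, mul_one]

theorem gaussSumTerm_mul {n₁ n₂ : GaussianInt} (h₁ : IsCoprime n₁ 2) (h₂ : IsCoprime n₂ 2)
    (k y z : GaussianInt) :
    gaussSumTerm k (n₁ * n₂) (n₂ * y + n₁ * z) =
      GaussianInt.toComplex (quarticSymbol n₂ n₁) * GaussianInt.toComplex (quarticSymbol n₁ n₂) *
        (gaussSumTerm k n₁ y * gaussSumTerm k n₂ z) := by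
  have hne {n : GaussianInt} (h : IsCoprime n 2) : (n : ℂ) ≠ 0 :=
    GaussianInt.toComplex_eq_zero.not.mpr (GaussianInt.ne_zero_of_isCoprime_two h)
  have hχ : quarticSymbol (n₂ * y + n₁ * z) (n₁ * n₂) =
      quarticSymbol n₂ n₁ * quarticSymbol y n₁ * (quarticSymbol n₁ n₂ * quarticSymbol z n₂) := by
    rw [quarticSymbol_mul_right, quarticSymbol_congr_left (n := n₁) (b := n₂ * y) ⟨z, by ring⟩,
      quarticSymbol_congr_left (n := n₂) (b := n₁ * z) ⟨y, by ring⟩,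
      quarticSymbol_mul_left h₁, quarticSymbol_mul_left h₂]
  have harg : (k : ℂ) * (n₂ * y + n₁ * z : GaussianInt) / (n₁ * n₂ : GaussianInt) =
      k * y / n₁ + k * z / n₂ := by
    simp only [map_add, map_mul]
    field_simp [hne h₁, hne h₂]
  rw [gaussSumTerm, gaussSumTerm, gaussSumTerm, hχ, harg, echar_add]
  simp only [map_mul]
  ring

/-- for odd coprime `n₁, n₂`,
`g(r, n₁n₂) = (n₂/n₁)₄ (n₁/n₂)₄ g(r,n₁) g(r,n₂)`. -/
theorem gaussSumK_mul_right (r n₁ n₂ : GaussianInt) (h1 : IsCoprime n₁ 2)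
    (h2 : IsCoprime n₂ 2) (h12 : IsCoprime n₁ n₂) :
    gaussSumK r (n₁ * n₂) =
      GaussianInt.toComplex (quarticSymbol n₂ n₁) * GaussianInt.toComplex (quarticSymbol n₁ n₂) *
        gaussSumK r n₁ * gaussSumK r n₂ := by
  have := GaussianInt.finite_quotient_span_singleton (GaussianInt.ne_zero_of_isCoprime_two h1)
  have := GaussianInt.finite_quotient_span_singleton (GaussianInt.ne_zero_of_isCoprime_two h2)
  simp only [gaussSumK_eq_finsum]
  rw [finsum_quotient_span_mul h12 fun _ _ => gaussSumTerm_congr, mul_assoc _ (finsum _),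
    finsum_mul, mul_finsum]
  simp_rw [mul_finsum, gaussSumTerm_mul h1 h2]
end
end
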